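/- Let α > 0, l ∈ (0,π), and δ ≥ 0, and set a_0 = (1+δ)l/((1+απ)(δ + 2l·c_α − l²c_α²)). For a ∈ [0, π−l] let J_a = δ + χ_{[a−l,a+l]} as a function on [−π,π]. If a_0 < π−l, then a ↦ osc(u_{J_a}) is increasing on [0, a_0] and decreasing on [a_0, π−l]; if a_0 ≥ π−l, then a ↦ osc(u_{J_a}) is increasing on [0, π−l]. -/

import Mathlib

/-
On `[-π, π]` the solution for the source `δ + χ_[a-l,a+l]` is a constant minus the potential
`q_a x = δ x²/2 + c l a x + K (x - a) / 2`, where `K t = ∫_{-l}^{l} |t - s| ds` is the upper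
envelope of the parabolas `l² + 2 g t - g²`, `|g| ≤ l`. Hence `q_a` is convex and, as
`q_a π ≤ q_a (-π)`, largest at `-π`; it is smallest at the critical point of the parabola touching
it there, which lies in `[a - l, a + l]` while `a (δ + c l) ≤ l (1 + δ)` and to the left of it
afterwards. In the first regime the oscillation is a concave quadratic in `a` with vertex `a₀`, in
the second it decreases, and `a₀` lies in the first regime.
-/
open MeasureTheory Real Set Filter

noncomputable def cA (α : ℝ) : ℝ := α / (1 + α * π)

noncomputable def robinG (α x y : ℝ) : ℝ :=
  -(1/2) * cA α * x * y - (1/2) * |x - y| + 1 / (2 * cA α)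

/-- Solution of the Robin problem with heat source `f`. -/
noncomputable def robinSol (α : ℝ) (f : ℝ → ℝ) (x : ℝ) : ℝ :=
  ∫ y in (-π)..π, robinG α x y * f y

/-- The class 𝔉(m,M,s) of heat sources. -/
def memF (m M s : ℝ) (f : ℝ → ℝ) : Prop :=
  MeasureTheory.IntegrableOn f (Set.Icc (-π) π) MeasureTheory.volume ∧
  (∀ᵐ x ∂(MeasureTheory.volume.restrict (Set.Icc (-π) π)), m ≤ f x ∧ f x ≤ M) ∧
  (∫ x in (-π)..π, f x) = 2 * π * s

/-- Temperature gap (oscillation) over `[-π, π]`. -/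
noncomputable def osc (u : ℝ → ℝ) : ℝ :=
  sSup (u '' Set.Icc (-π) π) - sInf (u '' Set.Icc (-π) π)

theorem cA_pos {α : ℝ} (hα : 0 < α) : 0 < cA α := div_pos hα (by positivity)

theorem one_sub_cA_mul_pi {α : ℝ} (hα : 0 < α) : 1 - cA α * π = 1 / (1 + α * π) := by
  have : 0 < 1 + α * π := by positivity
  rw [cA]
  field_simp
  ring

theorem cA_mul_pi_lt_one {α : ℝ} (hα : 0 < α) : cA α * π < 1 := by
  have : 0 < 1 / (1 + α * π) := by positivity
  linarith [one_sub_cA_mul_pi hα]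

open Asymptotics in
theorem hasDerivAt_mul_abs (u : ℝ) : HasDerivAt (fun v : ℝ => v * |v|) (2 * |u|) u := by
  rcases eq_or_ne u 0 with rfl | hu
  · rw [hasDerivAt_iff_isLittleO_nhds_zero]
    simp only [zero_add, abs_zero, mul_zero, sub_zero, smul_eq_mul]
    refine (isBigO_of_le _ fun h => ?_).trans_isLittleO (isLittleO_pow_id (n := 2) (by norm_num))
    simp [pow_two]
  · refine ((hasDerivAt_id' u).mul (hasDerivAt_abs hu)).congr_deriv ?_
    rcases hu.lt_or_gt with h | h <;> simp [abs_of_neg, abs_of_pos, h] <;> ring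

theorem integral_abs_sub (x p q : ℝ) :
    ∫ y in p..q, |x - y| = ((x - p) * |x - p| - (x - q) * |x - q|) / 2 := by
  have hderiv (y : ℝ) : HasDerivAt (fun y => -((x - y) * |x - y|) / 2) |x - y| y :=
    (((hasDerivAt_mul_abs (x - y)).comp y ((hasDerivAt_id' y).const_sub x)).neg.div_const
      2).congr_deriv (by ring)
  rw [intervalIntegral.integral_eq_sub_of_hasDerivAt (fun y _ => hderiv y)
    ((continuous_const.sub continuous_id).abs.intervalIntegrable _ _)]
  ring

noncomputable def absConv (l t : ℝ) : ℝ := ((t + l) * |t + l| - (t - l) * |t - l|) / 2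

theorem integral_abs_sub_eq_absConv (x a l : ℝ) :
    ∫ y in (a - l)..(a + l), |x - y| = absConv l (x - a) := by
  rw [integral_abs_sub, absConv]
  ring_nf

theorem absConv_of_abs_le {l t : ℝ} (h : |t| ≤ l) : absConv l t = t ^ 2 + l ^ 2 := by
  rw [abs_le] at h
  rw [absConv, abs_of_nonneg (by linarith : 0 ≤ t + l), abs_of_nonpos (by linarith : t - l ≤ 0)]
  ring

theorem absConv_of_le_neg {l t : ℝ} (hl : 0 ≤ l) (h : t ≤ -l) : absConv l t = -2 * l * t := by
  rw [absConv, abs_of_nonpos (by linarith : t + l ≤ 0), abs_of_nonpos (by linarith : t - l ≤ 0)]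
  ring

theorem absConv_of_le {l t : ℝ} (hl : 0 ≤ l) (h : l ≤ t) : absConv l t = 2 * l * t := by
  rw [absConv, abs_of_nonneg (by linarith : 0 ≤ t + l), abs_of_nonneg (by linarith : 0 ≤ t - l)]
  ring

theorem tangent_le_absConv {l g : ℝ} (hg : |g| ≤ l) (t : ℝ) :
    l ^ 2 + 2 * g * t - g ^ 2 ≤ absConv l t := by
  rw [abs_le] at hg
  rcases le_total t (-l) with h | h
  · rw [absConv_of_le_neg (by linarith) h]; nlinarith
  rcases le_total t l with h' | h'
  · rw [absConv_of_abs_le (abs_le.2 ⟨h, h'⟩)]; nlinarith [sq_nonneg (t - g)]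
  · rw [absConv_of_le (by linarith) h']; nlinarith

theorem exists_tangent_eq_absConv {l : ℝ} (hl : 0 ≤ l) (t : ℝ) :
    ∃ g, |g| ≤ l ∧ absConv l t = l ^ 2 + 2 * g * t - g ^ 2 := by
  rcases le_total t (-l) with h | h
  · exact ⟨-l, by rw [abs_neg, abs_of_nonneg hl], by rw [absConv_of_le_neg hl h]; ring⟩
  rcases le_total t l with h' | h'
  · exact ⟨t, abs_le.2 ⟨h, h'⟩, by rw [absConv_of_abs_le (abs_le.2 ⟨h, h'⟩)]; ring⟩
  · exact ⟨l, (abs_of_nonneg hl).le, by rw [absConv_of_le hl h']; ring⟩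

theorem integral_robinG (α x p q : ℝ) :
    ∫ y in p..q, robinG α x y = -cA α * x * (q ^ 2 - p ^ 2) / 4
      - (∫ y in p..q, |x - y|) / 2 + (q - p) / (2 * cA α) := by
  have h1 : IntervalIntegrable (fun y => -(1/2) * cA α * x * y) volume p q :=
    (continuous_const.mul continuous_id).intervalIntegrable _ _
  have h2 : IntervalIntegrable (fun y => (1/2) * |x - y|) volume p q :=
    (continuous_const.mul (continuous_const.sub continuous_id).abs).intervalIntegrable _ _
  simp only [robinG]
  rw [intervalIntegral.integral_add (h1.sub h2) intervalIntegrable_const,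
    intervalIntegral.integral_sub h1 h2, intervalIntegral.integral_const_mul,
    intervalIntegral.integral_const_mul, integral_id, intervalIntegral.integral_const, smul_eq_mul]
  ring

theorem robinSol_const_add_indicator (α δ : ℝ) {p q : ℝ} (hp : -π ≤ p) (hpq : p ≤ q) (hq : q ≤ π)
    (x : ℝ) :
    robinSol α (fun y => δ + (Icc p q).indicator (fun _ => (1:ℝ)) y) x
      = δ * (∫ y in (-π)..π, robinG α x y) + ∫ y in p..q, robinG α x y := by
  have hG : Continuous (robinG α x) := by unfold robinG; fun_prop
  have hsplit : (fun y => robinG α x y * (δ + (Icc p q).indicator (fun _ => (1:ℝ)) y))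
      = fun y => δ * robinG α x y + (Icc p q).indicator (robinG α x) y := by
    ext y
    by_cases hy : y ∈ Icc p q <;> simp [hy, mul_add, mul_comm]
  have hδG : IntervalIntegrable (fun y => δ * robinG α x y) volume (-π) π :=
    (continuous_const.mul hG).intervalIntegrable _ _
  have hindG : IntervalIntegrable ((Icc p q).indicator (robinG α x)) volume (-π) π :=
    (intervalIntegrable_iff.1 (hG.intervalIntegrable _ _)).indicator measurableSet_Icc
      |> intervalIntegrable_iff.2
  have hind : ∫ y in (-π)..π, (Icc p q).indicator (robinG α x) y = ∫ y in p..q, robinG α x y := by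
    rw [intervalIntegral.integral_of_le (by linarith), ← integral_Icc_eq_integral_Ioc,
      setIntegral_indicator measurableSet_Icc, inter_eq_right.2 (Icc_subset_Icc hp hq),
      integral_Icc_eq_integral_Ioc, intervalIntegral.integral_of_le hpq]
  rw [robinSol, hsplit, intervalIntegral.integral_add hδG hindG,
    intervalIntegral.integral_const_mul, hind]

noncomputable def heatPotential (c l δ a x : ℝ) : ℝ :=
  δ * x ^ 2 / 2 + c * l * a * x + absConv l (x - a) / 2

theorem robinSol_eq_sub_heatPotential (α δ : ℝ) {l a x : ℝ} (hl : 0 ≤ l) (ha₁ : -π ≤ a - l)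
    (ha₂ : a + l ≤ π) (hx : x ∈ Icc (-π) π) :
    robinSol α (fun y => δ + (Icc (a - l) (a + l)).indicator (fun _ => (1:ℝ)) y) x
      = δ * (π / cA α - π ^ 2 / 2) + l / cA α - heatPotential (cA α) l δ a x := by
  have hπ : ∫ y in (-π)..π, |x - y| = x ^ 2 + π ^ 2 := by
    rw [integral_abs_sub, abs_of_nonneg (by linarith [hx.1]), abs_of_nonpos (by linarith [hx.2])]
    ring
  rw [robinSol_const_add_indicator α δ ha₁ (by linarith) ha₂, integral_robinG, integral_robinG,
    integral_abs_sub_eq_absConv, hπ, heatPotential]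
  ring

section heatPotential

variable {c l δ a : ℝ}

theorem heatPotential_le_of_tangent (hδ : 0 ≤ δ) {g y : ℝ} (hg : |g| ≤ l)
    (htouch : absConv l (y - a) = l ^ 2 + 2 * g * (y - a) - g ^ 2)
    (hcrit : δ * y + c * l * a + g = 0) (x : ℝ) :
    heatPotential c l δ a y ≤ heatPotential c l δ a x := by
  have := tangent_le_absConv hg (x - a)
  unfold heatPotential
  nlinarith [mul_nonneg hδ (sq_nonneg (x - y)), congrArg (· * (x - y)) hcrit]

theorem heatPotential_chord (hl : 0 ≤ l) (hδ : 0 ≤ δ) {x : ℝ} (hx : x ∈ Icc (-π) π) :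
    2 * π * heatPotential c l δ a x
      ≤ (π - x) * heatPotential c l δ a (-π) + (π + x) * heatPotential c l δ a π := by
  obtain ⟨g, hg, hx_eq⟩ := exists_tangent_eq_absConv hl (x - a)
  have hπx : 0 ≤ π - x := sub_nonneg.2 hx.2
  have hxπ : 0 ≤ π + x := neg_le_iff_add_nonneg'.1 hx.1
  have h₁ := mul_le_mul_of_nonneg_left (tangent_le_absConv hg (-π - a)) hπx
  have h₂ := mul_le_mul_of_nonneg_left (tangent_le_absConv hg (π - a)) hxπ
  unfold heatPotential
  rw [hx_eq]
  nlinarith [mul_nonneg (mul_nonneg pi_pos.le hδ) (mul_nonneg hπx hxπ)]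

theorem heatPotential_pi_le (hl : 0 ≤ l) (hcπ : c * π ≤ 1) (ha : 0 ≤ a) (hal : a + l ≤ π) :
    heatPotential c l δ a π ≤ heatPotential c l δ a (-π) := by
  unfold heatPotential
  rw [absConv_of_le hl (by linarith), absConv_of_le_neg hl (by linarith [pi_pos])]
  nlinarith [mul_nonneg (mul_nonneg hl ha) (sub_nonneg.2 hcπ)]

theorem heatPotential_le_neg_pi (hl : 0 ≤ l) (hδ : 0 ≤ δ) (hcπ : c * π ≤ 1) (ha : 0 ≤ a)
    (hal : a + l ≤ π) {x : ℝ} (hx : x ∈ Icc (-π) π) :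
    heatPotential c l δ a x ≤ heatPotential c l δ a (-π) := by
  have hchord := heatPotential_chord (c := c) (a := a) hl hδ hx
  have hend := mul_le_mul_of_nonneg_left (heatPotential_pi_le (δ := δ) hl hcπ ha hal)
    (neg_le_iff_add_nonneg'.1 hx.1)
  nlinarith [pi_pos]

end heatPotential

theorem osc_eq_of_isMinOn_of_isMaxOn {u : ℝ → ℝ} {x₀ x₁ : ℝ} (h₀ : x₀ ∈ Icc (-π) π)
    (h₁ : x₁ ∈ Icc (-π) π) (hmin : IsMinOn u (Icc (-π) π) x₀)
    (hmax : IsMaxOn u (Icc (-π) π) x₁) : osc u = u x₁ - u x₀ := by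
  have hleast : IsLeast (u '' Icc (-π) π) (u x₀) :=
    ⟨mem_image_of_mem u h₀, by rintro _ ⟨x, hx, rfl⟩; exact hmin hx⟩
  have hgreatest : IsGreatest (u '' Icc (-π) π) (u x₁) :=
    ⟨mem_image_of_mem u h₁, by rintro _ ⟨x, hx, rfl⟩; exact hmax hx⟩
  rw [osc, hleast.csInf_eq, hgreatest.csSup_eq]

theorem strictAntiOn_of_inter_Iic_of_inter_Ici {α β : Type*} [LinearOrder α] [Preorder β]
    {f : α → β} {s : Set α} (hs : s.OrdConnected) {m : α} (h₁ : StrictAntiOn f (s ∩ Iic m))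
    (h₂ : StrictAntiOn f (s ∩ Ici m)) : StrictAntiOn f s := by
  intro p hp q hq hpq
  rcases le_total q m with hqm | hmq
  · exact h₁ ⟨hp, hpq.le.trans hqm⟩ ⟨hq, hqm⟩ hpq
  rcases le_or_gt m p with hmp | hpm
  · exact h₂ ⟨hp, hmp⟩ ⟨hq, hmq⟩ hpq
  have hm : m ∈ s := hs.out hp hq ⟨hpm.le, hmq⟩
  exact (h₂.antitoneOn ⟨hm, le_rfl⟩ ⟨hq, hmq⟩ hmq).trans_lt (h₁ ⟨hp, hpm.le⟩ ⟨hm, le_rfl⟩ hpm)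

noncomputable def tempGap (α l δ a : ℝ) : ℝ :=
  osc (robinSol α (fun x => δ + (Icc (a - l) (a + l)).indicator (fun _ => (1:ℝ)) x))

noncomputable def criticalPos (α l δ : ℝ) : ℝ :=
  (1 + δ) * l / ((1 + α * π) * (δ + 2 * l * cA α - l ^ 2 * (cA α) ^ 2))

theorem criticalPos_eq {α : ℝ} (hα : 0 < α) (l δ : ℝ) : criticalPos α l δ
    = (1 + δ) * l * (1 - cA α * π) / (δ + 2 * l * cA α - l ^ 2 * cA α ^ 2) := by
  rw [criticalPos, one_sub_cA_mul_pi hα, mul_one_div, div_div]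

section tempGap

variable {α l δ a : ℝ}

theorem tempGap_eq_of_isMinOn (hα : 0 < α) (hl : 0 ≤ l) (hδ : 0 ≤ δ) (ha : 0 ≤ a)
    (hal : a + l ≤ π) {y : ℝ} (hy : y ∈ Icc (-π) π)
    (hmin : ∀ x, heatPotential (cA α) l δ a y ≤ heatPotential (cA α) l δ a x) :
    tempGap α l δ a = heatPotential (cA α) l δ a (-π) - heatPotential (cA α) l δ a y := by
  have hu (x) (hx : x ∈ Icc (-π) π) := robinSol_eq_sub_heatPotential α δ hl
    (by linarith [pi_pos]) hal hx
  have hneg : -π ∈ Icc (-π) π := ⟨le_rfl, by linarith [pi_pos]⟩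
  have hmax (x) (hx : x ∈ Icc (-π) π) := heatPotential_le_neg_pi (c := cA α) hl hδ
    (cA_mul_pi_lt_one hα).le ha hal hx
  rw [tempGap, osc_eq_of_isMinOn_of_isMaxOn hneg hy (fun x hx => ?_) (fun x hx => ?_), hu _ hy,
    hu _ hneg]
  · ring
  · simp only [mem_ofPred_eq, hu _ hx, hu _ hneg]
    linarith [hmax x hx]
  · simp only [mem_ofPred_eq, hu _ hx, hu _ hy]
    linarith [hmin x]

theorem tempGap_of_le (hα : 0 < α) (hl : 0 ≤ l) (hδ : 0 ≤ δ) (ha : 0 ≤ a) (hal : a + l ≤ π)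
    (hA : a * (δ + cA α * l) ≤ l * (1 + δ)) :
    tempGap α l δ a = δ * π ^ 2 / 2 - cA α * l * a * π + l * a + l * π - (a ^ 2 + l ^ 2) / 2
      + a ^ 2 * (1 - cA α * l) ^ 2 / (2 * (1 + δ)) := by
  have hc := cA_pos hα
  have hδ₁ : 0 < 1 + δ := by linarith
  set y := a * (1 - cA α * l) / (1 + δ) with hy_def
  have hya : y - a = -(a * (δ + cA α * l) / (1 + δ)) := by rw [hy_def]; field_simp; ring
  have hg : |y - a| ≤ l := by
    rw [hya, abs_neg, abs_of_nonneg (by positivity), div_le_iff₀ hδ₁]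
    linarith
  have htouch := absConv_of_abs_le hg
  have hy : y ∈ Icc (-π) π := by
    rw [abs_le] at hg
    constructor <;> nlinarith [div_nonneg (by positivity : 0 ≤ a * (δ + cA α * l)) hδ₁.le]
  rw [tempGap_eq_of_isMinOn hα hl hδ ha hal hy (heatPotential_le_of_tangent hδ hg
    (by rw [htouch]; ring) (by rw [hy_def]; field_simp; ring))]
  unfold heatPotential
  rw [absConv_of_le_neg hl (by linarith), htouch, hy_def]
  field_simp
  ring

theorem tempGap_of_ge (hα : 0 < α) (hl : 0 ≤ l) (hδ : 0 < δ) (ha : 0 ≤ a) (hal : a + l ≤ π)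
    (hB : l * (1 + δ) ≤ a * (δ + cA α * l)) :
    tempGap α l δ a = δ * π ^ 2 / 2 - cA α * l * a * π + l * π
      + (l - cA α * l * a) ^ 2 / (2 * δ) := by
  have hc := cA_pos hα
  have hcπ := cA_mul_pi_lt_one hα
  set y := (l - cA α * l * a) / δ with hy_def
  have hya : y - a ≤ -l := by
    rw [hy_def, sub_le_iff_le_add, div_le_iff₀ hδ]
    linarith
  have hy : y ∈ Icc (-π) π := by
    have : cA α * l * a ≤ l := by
      nlinarith [mul_le_mul_of_nonneg_left (by linarith : a ≤ π) (mul_nonneg hc.le hl)]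
    constructor <;> nlinarith [div_nonneg (by linarith : 0 ≤ l - cA α * l * a) hδ.le, pi_pos]
  have htouch := absConv_of_le_neg hl hya
  rw [tempGap_eq_of_isMinOn hα hl hδ.le ha hal hy
    (heatPotential_le_of_tangent (g := -l) hδ.le (by rw [abs_neg, abs_of_nonneg hl])
      (by rw [htouch]; ring) (by rw [hy_def]; field_simp; ring))]
  unfold heatPotential
  rw [absConv_of_le_neg hl (by linarith), htouch, hy_def]
  field_simp
  ring

theorem tempGap_sub_of_le (hα : 0 < α) (hl : 0 ≤ l) (hδ : 0 ≤ δ) {p q : ℝ} (hp : 0 ≤ p)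
    (hq : 0 ≤ q) (hpl : p + l ≤ π) (hql : q + l ≤ π) (hpA : p * (δ + cA α * l) ≤ l * (1 + δ))
    (hqA : q * (δ + cA α * l) ≤ l * (1 + δ)) (hD : δ + 2 * l * cA α - l ^ 2 * cA α ^ 2 ≠ 0) :
    tempGap α l δ q - tempGap α l δ p = (δ + 2 * l * cA α - l ^ 2 * cA α ^ 2) * (q - p)
      * (2 * criticalPos α l δ - p - q) / (2 * (1 + δ)) := by
  have : 1 + δ ≠ 0 := by positivity
  rw [tempGap_of_le hα hl hδ hq hql hqA, tempGap_of_le hα hl hδ hp hpl hpA,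
    criticalPos_eq hα]
  generalize hD_def : δ + 2 * l * cA α - l ^ 2 * cA α ^ 2 = D at hD ⊢
  field_simp
  rw [← hD_def]
  ring

theorem criticalDenom_pos (hα : 0 < α) (hl : l ∈ Ioo 0 π) (hδ : 0 ≤ δ) :
    0 < δ + 2 * l * cA α - l ^ 2 * cA α ^ 2 := by
  have hcl : cA α * l < 1 := by
    nlinarith [cA_mul_pi_lt_one hα, mul_lt_mul_of_pos_left hl.2 (cA_pos hα)]
  nlinarith [mul_pos (mul_pos (cA_pos hα) hl.1) (by linarith : 0 < 2 - cA α * l)]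

theorem criticalPos_pos (hα : 0 < α) (hl : l ∈ Ioo 0 π) (hδ : 0 ≤ δ) : 0 < criticalPos α l δ := by
  have := criticalDenom_pos hα hl hδ
  have := hl.1
  unfold criticalPos
  positivity

theorem criticalPos_mul_lt (hα : 0 < α) (hl : l ∈ Ioo 0 π) (hδ : 0 ≤ δ) :
    criticalPos α l δ * (δ + cA α * l) < l * (1 + δ) := by
  have hc := cA_pos hα
  have hcπ := cA_mul_pi_lt_one hα
  have hcl : cA α * l ≤ cA α * π := mul_le_mul_of_nonneg_left hl.2.le hc.le
  rw [criticalPos_eq hα, div_mul_eq_mul_div, div_lt_iff₀ (criticalDenom_pos hα hl hδ)]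
  have hgap : (1 - cA α * π) * (δ + cA α * l) < δ + 2 * l * cA α - l ^ 2 * cA α ^ 2 := by
    nlinarith [mul_nonneg (mul_nonneg hc.le pi_pos.le) hδ, mul_pos hc hl.1,
      mul_nonneg (mul_pos hc hl.1).le (by linarith : 0 ≤ cA α * π - cA α * l)]
  nlinarith [mul_lt_mul_of_pos_left hgap (by nlinarith [hl.1] : 0 < (1 + δ) * l)]

theorem tempGap_strictMonoOn (hα : 0 < α) (hl : l ∈ Ioo 0 π) (hδ : 0 ≤ δ) :
    StrictMonoOn (tempGap α l δ) (Icc 0 (min (criticalPos α l δ) (π - l))) := by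
  have hD := criticalDenom_pos hα hl hδ
  have hA {a : ℝ} (ha : a ∈ Icc 0 (min (criticalPos α l δ) (π - l))) :
      a * (δ + cA α * l) ≤ l * (1 + δ) :=
    (mul_le_mul_of_nonneg_right (ha.2.trans (min_le_left _ _))
      (by have := cA_pos hα; have := hl.1; positivity)).trans (criticalPos_mul_lt hα hl hδ).le
  intro p hp q hq hpq
  have hp' := le_min_iff.1 hp.2
  have hq' := le_min_iff.1 hq.2
  rw [← sub_pos, tempGap_sub_of_le hα hl.1.le hδ hp.1 hq.1 (by linarith) (by linarith) (hA hp)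
    (hA hq) hD.ne']
  exact div_pos (mul_pos (mul_pos hD (sub_pos.2 hpq)) (by linarith)) (by positivity)

theorem tempGap_strictAntiOn_of_le (hα : 0 < α) (hl : l ∈ Ioo 0 π) (hδ : 0 ≤ δ) :
    StrictAntiOn (tempGap α l δ)
      (Icc (criticalPos α l δ) (π - l) ∩ Iic (l * (1 + δ) / (δ + cA α * l))) := by
  have hD := criticalDenom_pos hα hl hδ
  have h0 := criticalPos_pos hα hl hδ
  have hA {a : ℝ} (ha : a ≤ l * (1 + δ) / (δ + cA α * l)) : a * (δ + cA α * l) ≤ l * (1 + δ) :=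
    (le_div_iff₀ (by have := cA_pos hα; have := hl.1; positivity)).1 ha
  rintro p ⟨hp, hpA⟩ q ⟨hq, hqA⟩ hpq
  rw [← sub_neg, tempGap_sub_of_le hα hl.1.le hδ (by linarith [hp.1]) (by linarith [hq.1])
    (by linarith [hp.2]) (by linarith [hq.2]) (hA hpA) (hA hqA) hD.ne']
  exact div_neg_of_neg_of_pos (mul_neg_of_pos_of_neg (mul_pos hD (sub_pos.2 hpq))
    (by linarith [hp.1, hq.1])) (by positivity)

theorem tempGap_strictAntiOn_of_ge (hα : 0 < α) (hl : l ∈ Ioo 0 π) (hδ : 0 ≤ δ) :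
    StrictAntiOn (tempGap α l δ) (Icc 0 (π - l) ∩ Ici (l * (1 + δ) / (δ + cA α * l))) := by
  have hc := cA_pos hα
  have hcπ := cA_mul_pi_lt_one hα
  have hB {a : ℝ} (ha : l * (1 + δ) / (δ + cA α * l) ≤ a) : l * (1 + δ) ≤ a * (δ + cA α * l) :=
    (div_le_iff₀ (by have := hl.1; positivity)).1 ha
  rintro p ⟨hp, hpB⟩ q ⟨hq, hqB⟩ hpq
  have hδ' : 0 < δ := by
    refine hδ.lt_of_ne fun h => ?_
    subst h
    nlinarith [hB hpB, mul_lt_mul_of_pos_left (by linarith [hp.2, hl.1] : p < π)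
      (mul_pos hc hl.1), mul_lt_mul_of_pos_left hcπ hl.1]
  have key : tempGap α l δ p - tempGap α l δ q
      = cA α * l * (q - p) * (2 * δ * π + 2 * l - cA α * l * (p + q)) / (2 * δ) := by
    rw [tempGap_of_ge hα hl.1.le hδ' hp.1 (by linarith [hp.2]) (hB hpB),
      tempGap_of_ge hα hl.1.le hδ' hq.1 (by linarith [hq.2]) (hB hqB)]
    field_simp
    ring
  have hpos : 0 < 2 * δ * π + 2 * l - cA α * l * (p + q) := by
    nlinarith [mul_le_mul_of_nonneg_left (by linarith [hp.2, hq.2, hl.1] : p + q ≤ 2 * π)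
      (mul_pos hc hl.1).le, mul_pos hδ' pi_pos, hl.1]
  rw [← sub_pos, key]
  exact div_pos (mul_pos (mul_pos (mul_pos hc hl.1) (sub_pos.2 hpq)) hpos) (by positivity)

theorem tempGap_strictAntiOn (hα : 0 < α) (hl : l ∈ Ioo 0 π) (hδ : 0 ≤ δ) :
    StrictAntiOn (tempGap α l δ) (Icc (criticalPos α l δ) (π - l)) :=
  strictAntiOn_of_inter_Iic_of_inter_Ici ordConnected_Icc (tempGap_strictAntiOn_of_le hα hl hδ)
    ((tempGap_strictAntiOn_of_ge hα hl hδ).mono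
      (inter_subset_inter_left _ (Icc_subset_Icc_left (criticalPos_pos hα hl hδ).le)))

end tempGap

/-- Lemma 3 (monotonicity of the oscillation in the position `a`). -/
theorem lemma3_monotone (α l δ : ℝ) (hα : 0 < α) (hl : l ∈ Set.Ioo 0 π) (hδ : 0 ≤ δ)
    (a0 : ℝ)
    (ha0 : a0 = (1 + δ) * l / ((1 + α * π) * (δ + 2 * l * cA α - l^2 * (cA α)^2)))
    (Φ : ℝ → ℝ)
    (hΦ : Φ = fun a => osc (robinSol α
      (fun x => δ + (Set.Icc (a - l) (a + l)).indicator (fun _ => (1:ℝ)) x))) :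
    (a0 < π - l → StrictMonoOn Φ (Set.Icc 0 a0) ∧ StrictAntiOn Φ (Set.Icc a0 (π - l))) ∧
    (π - l ≤ a0 → StrictMonoOn Φ (Set.Icc 0 (π - l))) := by
  subst ha0 hΦ
  refine ⟨fun h => ⟨?_, tempGap_strictAntiOn hα hl hδ⟩, fun h => ?_⟩
  · exact (tempGap_strictMonoOn hα hl hδ).mono (Icc_subset_Icc_right (le_min le_rfl h.le))
  · exact (tempGap_strictMonoOn hα hl hδ).mono (Icc_subset_Icc_right (le_min h le_rfl))
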